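/- arXiv:1505.03369 — 4 statements merged into one kernel-verified Lean document; each statement's English description precedes it below -/
import Mathlib

section
/- Let K be the n×n Cartan matrix of SU(n+1), R = diag(i(n+1-i)/2)_{i=1}^n, P̃ = diag(n/(i(n+1-i)))_{i=1}^n, and S̃ = P̃^{-1} K R. Then S̃ is positive definite. -/
/-! The Cartan matrix factors as `K = Bᵀ B` through the `(n+1) × n` difference matrix `B`, which
has a left inverse given by partial sums; hence `K` is positive definite. Since `P̃⁻¹ = (2/n) R`
and `R` is a symmetric invertible diagonal matrix, `S̃ = (2/n) Rᵀ K R` is a positive multiple of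
a congruence transform of `K`. -/

open Matrix

/-- The `n×n` Cartan matrix of `SU(n+1)`. -/
noncomputable def cartanSU (n : ℕ) : Matrix (Fin n) (Fin n) ℝ :=
  fun i j =>
    if i = j then 2
    else if (i : ℕ) + 1 = (j : ℕ) ∨ (j : ℕ) + 1 = (i : ℕ) then -1
    else 0

/-- `R = diag(R_1, …, R_n)` with `R_i = i(n+1-i)/2` (1-indexed). -/
noncomputable def Rmat (n : ℕ) : Matrix (Fin n) (Fin n) ℝ :=
  Matrix.diagonal (fun i => ((i : ℝ) + 1) * ((n : ℝ) - (i : ℝ)) / 2)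

/-- `P̃ = diag(P̃_1, …, P̃_n)` with `P̃_i = n/(i(n+1-i))` (1-indexed). -/
noncomputable def Pmat (n : ℕ) : Matrix (Fin n) (Fin n) ℝ :=
  Matrix.diagonal (fun i => (n : ℝ) / (((i : ℝ) + 1) * ((n : ℝ) - (i : ℝ))))

section DifferenceMatrix

variable (R : Type*) [Ring R] (n : ℕ)

def diffMatrix : Matrix (Fin (n + 1)) (Fin n) R :=
  Matrix.of fun k i => (if k = i.castSucc then 1 else 0) - (if k = i.succ then 1 else 0)

def partialSumMatrix : Matrix (Fin n) (Fin (n + 1)) R :=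
  Matrix.of fun i k => if k ≤ i.castSucc then 1 else 0

variable {R n}

theorem partialSumMatrix_mul_diffMatrix : partialSumMatrix R n * diffMatrix R n = 1 := by
  ext i j
  simp only [partialSumMatrix, diffMatrix, Matrix.mul_apply, Matrix.of_apply, mul_sub, mul_boole,
    Finset.sum_sub_distrib, Finset.sum_ite_eq', Finset.mem_univ, if_true, Matrix.one_apply]
  simp only [Fin.le_def, Fin.ext_iff, Fin.val_castSucc, Fin.val_succ]
  split_ifs <;> first | omega | simp

theorem diffMatrix_mulVec_injective : Function.Injective (diffMatrix R n).mulVec := by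
  intro x y h
  simpa [Matrix.mulVec_mulVec, partialSumMatrix_mul_diffMatrix] using
    congrArg (partialSumMatrix R n *ᵥ ·) h

end DifferenceMatrix

theorem cartanSU_eq_transpose_mul_self (n : ℕ) :
    cartanSU n = (diffMatrix ℝ n)ᵀ * diffMatrix ℝ n := by
  ext i j
  simp only [cartanSU, diffMatrix, Matrix.mul_apply, Matrix.transpose_apply, Matrix.of_apply,
    mul_sub, mul_boole, Finset.sum_sub_distrib, Finset.sum_ite_eq', Finset.mem_univ, if_true]
  simp only [Fin.ext_iff, Fin.val_castSucc, Fin.val_succ]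
  split_ifs <;> first | omega | norm_num

theorem cartanSU_posDef (n : ℕ) : (cartanSU n).PosDef := by
  rw [cartanSU_eq_transpose_mul_self, ← Matrix.conjTranspose_eq_transpose_of_trivial,
    ← Matrix.mul_one (diffMatrix ℝ n)ᴴ]
  exact Matrix.PosDef.one.conjTranspose_mul_mul_same diffMatrix_mulVec_injective

theorem sub_val_pos {n : ℕ} (i : Fin n) : 0 < (n : ℝ) - (i : ℝ) :=
  sub_pos.mpr (by exact_mod_cast i.isLt)

theorem inv_Pmat (n : ℕ) : (Pmat n)⁻¹ = (2 / n : ℝ) • Rmat n := by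
  refine Matrix.inv_eq_right_inv ?_
  rw [Pmat, Rmat, ← Matrix.diagonal_smul, Matrix.diagonal_mul_diagonal, ← Matrix.diagonal_one]
  congr 1
  funext i
  have hi := (sub_val_pos i).ne'
  have hn : (n : ℝ) ≠ 0 := by have := i.pos; positivity
  simp only [Pi.smul_apply, smul_eq_mul]
  field_simp

theorem Rmat_conjTranspose (n : ℕ) : (Rmat n)ᴴ = Rmat n := by
  rw [Rmat, Matrix.diagonal_conjTranspose, star_trivial]

theorem Rmat_mulVec_injective (n : ℕ) : Function.Injective (Rmat n).mulVec :=
  Matrix.mulVec_injective_of_isUnit <| Matrix.isUnit_diagonal.mpr <| Pi.isUnit_iff.mpr fun i =>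
    (div_pos (mul_pos (by positivity) (sub_val_pos i)) two_pos).ne'.isUnit

theorem Stilde_posDef (n : ℕ) (hn : 1 ≤ n) :
    ((Pmat n)⁻¹ * cartanSU n * Rmat n).PosDef := by
  have hscale : (0 : ℝ) < 2 / n := by positivity
  have := ((cartanSU_posDef n).conjTranspose_mul_mul_same (Rmat_mulVec_injective n)).smul hscale
  rwa [Rmat_conjTranspose, ← smul_mul_assoc, ← smul_mul_assoc, ← inv_Pmat] at this
end

section
/- Let K be a symmetric positive definite n×n real matrix, Ω a measure space of finite positive measure |Ω|, and U : Ω → ℝ^n a vector function with components U_i ≥ 0 integrable. Suppose ∫_Ω (RU)^T K R (U - 𝟏) dx + (4π/λ) 𝟏^T K^{-1} N = 0, where R is a diagonal positive matrix with K^{-1}𝟏 = R𝟏, λ > 0, and N ∈ ℝ^n has nonnegative entries not all zero. Then λ > 16π (𝟏^T K^{-1} N)/(|Ω| 𝟏^T K^{-1} 𝟏). -/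
/-!
Completing the square: writing `v = R(U - 𝟏/2)` and `a = R𝟏/2`, one has `RU = v + a` and
`R(U - 𝟏) = v - a`, so by symmetry of `K` and `KR = 𝟏` the integrand of the constraint is
`vᵀKv - 𝟏ᵀK⁻¹𝟏/4`. Integrating, the constraint reads
`∫ vᵀKv - |Ω| 𝟏ᵀK⁻¹𝟏/4 + (4π/λ) 𝟏ᵀK⁻¹N = 0`, and `∫ vᵀKv > 0` because `K` is positive
definite and `v` is not a.e. zero. Multiplying by `λ` gives `16π 𝟏ᵀK⁻¹N < λ |Ω| 𝟏ᵀK⁻¹𝟏`.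
-/

open Matrix MeasureTheory Real

section CompletingTheSquare

variable {ι : Type*} [Fintype ι]

theorem Matrix.IsSymm.add_dotProduct_mulVec_sub {K : Matrix ι ι ℝ} (hK : K.IsSymm)
    (v a : ι → ℝ) :
    (v + a) ⬝ᵥ (K *ᵥ (v - a)) = v ⬝ᵥ (K *ᵥ v) - a ⬝ᵥ (K *ᵥ a) := by
  have hswap : a ⬝ᵥ (K *ᵥ v) = v ⬝ᵥ (K *ᵥ a) := by
    rw [dotProduct_mulVec, ← mulVec_transpose, hK.eq, dotProduct_comm]
  rw [mulVec_sub, add_dotProduct, dotProduct_sub, dotProduct_sub, hswap]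
  ring

variable [DecidableEq ι]

theorem diagonal_mulVec_dotProduct_eq_sub {K : Matrix ι ι ℝ} (hK : K.IsSymm) {R : ι → ℝ}
    (hKR : K *ᵥ R = fun _ => 1) (u : ι → ℝ) :
    (diagonal R *ᵥ u) ⬝ᵥ (K *ᵥ (diagonal R *ᵥ (u - fun _ => 1))) =
      (diagonal R *ᵥ (u - fun _ => 1 / 2)) ⬝ᵥ (K *ᵥ (diagonal R *ᵥ (u - fun _ => 1 / 2))) -
        R ⬝ᵥ (fun _ => 1) / 4 := by
  set v := diagonal R *ᵥ (u - fun _ => 1 / 2)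
  have hu : diagonal R *ᵥ u = v + (1 / 2 : ℝ) • R := by
    ext i
    simp only [mulVec_diagonal, Pi.add_apply, Pi.sub_apply, Pi.smul_apply, smul_eq_mul, v]
    ring
  have hu1 : diagonal R *ᵥ (u - fun _ => 1) = v - (1 / 2 : ℝ) • R := by
    ext i
    simp only [mulVec_diagonal, Pi.sub_apply, Pi.smul_apply, smul_eq_mul, v]
    ring
  have haKa : ((1 / 2 : ℝ) • R) ⬝ᵥ (K *ᵥ ((1 / 2 : ℝ) • R)) = R ⬝ᵥ (fun _ => 1) / 4 := by
    rw [mulVec_smul, hKR, smul_dotProduct, dotProduct_smul, smul_eq_mul, smul_eq_mul]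
    ring
  rw [hu, hu1, hK.add_dotProduct_mulVec_sub, haKa]

theorem diagonal_mulVec_eq_zero_iff {R : ι → ℝ} (hR : ∀ i, R i ≠ 0) {v : ι → ℝ} :
    diagonal R *ᵥ v = 0 ↔ v = 0 := by
  simp only [funext_iff, mulVec_diagonal, Pi.zero_apply, mul_eq_zero, hR, false_or]

end CompletingTheSquare

section Integral

variable {ι : Type*} [Fintype ι] {Ω : Type*} [MeasurableSpace Ω] {μ : Measure Ω}

theorem Matrix.PosDef.integral_dotProduct_mulVec_pos {K : Matrix ι ι ℝ} (hK : K.PosDef)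
    {V : Ω → ι → ℝ} (hint : Integrable (fun x => V x ⬝ᵥ (K *ᵥ V x)) μ)
    (hV : ¬ V =ᵐ[μ] 0) :
    0 < ∫ x, V x ⬝ᵥ (K *ᵥ V x) ∂μ := by
  have hnonneg : 0 ≤ fun x => V x ⬝ᵥ (K *ᵥ V x) := fun x =>
    hK.posSemidef.dotProduct_mulVec_nonneg (V x)
  refine (integral_nonneg hnonneg).lt_of_ne fun hzero => hV ?_
  filter_upwards [(integral_eq_zero_iff_of_nonneg hnonneg hint).1 hzero.symm] with x hx
  by_contra hVx
  exact (hK.dotProduct_mulVec_pos hVx).ne' hx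

end Integral

theorem necessary_condition_lambda_general
    {n : ℕ} (K : Matrix (Fin n) (Fin n) ℝ) (hK : K.PosDef)
    (R : Fin n → ℝ) (hRpos : ∀ i, 0 < R i)
    (hR1 : K⁻¹ *ᵥ (fun _ => (1 : ℝ)) = R)
    (lam : ℝ) (hlam : 0 < lam)
    (N : Fin n → ℝ)
    {Ω : Type*} [MeasurableSpace Ω] (μ : Measure Ω) [IsFiniteMeasure μ]
    (U : Ω → Fin n → ℝ)
    (hquadint : Integrable (fun x =>
      (Matrix.diagonal R *ᵥ (U x - fun _ => (1 : ℝ) / 2)) ⬝ᵥ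
        (K *ᵥ (Matrix.diagonal R *ᵥ (U x - fun _ => (1 : ℝ) / 2)))) μ)
    (hne : ¬ (U =ᵐ[μ] fun _ => fun _ => (1 : ℝ) / 2))
    (hconstraint :
      (∫ x, (Matrix.diagonal R *ᵥ U x) ⬝ᵥ
          (K *ᵥ (Matrix.diagonal R *ᵥ (U x - fun _ => (1 : ℝ)))) ∂μ)
        + (4 * π / lam) * ((fun _ => (1 : ℝ)) ⬝ᵥ (K⁻¹ *ᵥ N)) = 0) :
    lam > 16 * π * ((fun _ => (1 : ℝ)) ⬝ᵥ (K⁻¹ *ᵥ N)) /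
      ((μ Set.univ).toReal * ((fun _ => (1 : ℝ)) ⬝ᵥ (K⁻¹ *ᵥ fun _ => (1 : ℝ)))) := by
  have hKR : K *ᵥ R = fun _ => 1 := by
    rw [← hR1, mulVec_mulVec, mul_nonsing_inv K hK.det_pos.ne'.isUnit, one_mulVec]
  have hs : (fun _ => (1 : ℝ)) ⬝ᵥ (K⁻¹ *ᵥ fun _ => (1 : ℝ)) = R ⬝ᵥ fun _ => 1 := by
    rw [hR1, dotProduct_comm]
  have hs_nonneg : 0 ≤ R ⬝ᵥ fun _ => 1 := hs ▸ hK.posSemidef.inv.dotProduct_mulVec_nonneg _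
  have hV : ¬ (fun x => diagonal R *ᵥ (U x - fun _ => 1 / 2)) =ᵐ[μ] 0 := fun hV => hne <| by
    filter_upwards [hV] with x hx
    exact sub_eq_zero.1 ((diagonal_mulVec_eq_zero_iff fun i => (hRpos i).ne').1 hx)
  have hq := hK.integral_dotProduct_mulVec_pos hquadint hV
  have hKsymm : K.IsSymm := isHermitian_iff_isSymm.1 hK.isHermitian
  rw [funext fun x => diagonal_mulVec_dotProduct_eq_sub hKsymm hKR (U x)] at hconstraint
  rw [integral_sub hquadint (integrable_const _), integral_const, smul_eq_mul,
    measureReal_def] at hconstraint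
  rw [hs, gt_iff_lt]
  -- if `|Ω| 𝟏ᵀK⁻¹𝟏 = 0` the bound is `0` by the convention `x / 0 = 0`
  rcases (mul_nonneg ENNReal.toReal_nonneg hs_nonneg).eq_or_lt with hzero | hpos
  · rwa [← hzero, div_zero]
  · rw [div_lt_iff₀ hpos]
    field_simp at hconstraint
    nlinarith [mul_pos hq hlam]

theorem necessary_condition_lambda
    {n : ℕ} (K : Matrix (Fin n) (Fin n) ℝ) (hK : K.PosDef)
    (R : Fin n → ℝ) (hRpos : ∀ i, 0 < R i)
    (hR1 : K⁻¹ *ᵥ (fun _ => (1 : ℝ)) = R)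
    (lam : ℝ) (hlam : 0 < lam)
    (N : Fin n → ℝ) (hN : ∀ i, 0 ≤ N i) (hN0 : N ≠ 0)
    {Ω : Type*} [MeasurableSpace Ω] (μ : Measure Ω) [IsFiniteMeasure μ]
    (hμ : 0 < (μ Set.univ).toReal)
    (U : Ω → Fin n → ℝ) (hUnn : ∀ i, ∀ x, 0 ≤ U x i)
    (hUint : ∀ i, Integrable (fun x => U x i) μ)
    (hquadint : Integrable (fun x =>
      (Matrix.diagonal R *ᵥ (U x - fun _ => (1 : ℝ) / 2)) ⬝ᵥ
        (K *ᵥ (Matrix.diagonal R *ᵥ (U x - fun _ => (1 : ℝ) / 2)))) μ)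
    (hne : ¬ (U =ᵐ[μ] fun _ => fun _ => (1 : ℝ) / 2))
    (hconstraint :
      (∫ x, (Matrix.diagonal R *ᵥ U x) ⬝ᵥ
          (K *ᵥ (Matrix.diagonal R *ᵥ (U x - fun _ => (1 : ℝ)))) ∂μ)
        + (4 * π / lam) * ((fun _ => (1 : ℝ)) ⬝ᵥ (K⁻¹ *ᵥ N)) = 0) :
    lam > 16 * π * ((fun _ => (1 : ℝ)) ⬝ᵥ (K⁻¹ *ᵥ N)) /
      ((μ Set.univ).toReal * ((fun _ => (1 : ℝ)) ⬝ᵥ (K⁻¹ *ᵥ fun _ => (1 : ℝ)))) :=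
  necessary_condition_lambda_general K hK R hRpos hR1 lam hlam N μ U hquadint hne hconstraint
end

section
/- Let f : (0,∞) → ℝ be continuous, with lim_{t→0+} f(t) < 0, lim_{t→∞} f(t) = ∞, and satisfying: f is differentiable and f'(t) > f(t)/t for all t > 0. Then f has exactly one zero in (0,∞). -/
open Filter Set Topology

/-- `f' t > f t / t` is exactly the positivity of the derivative `(t f' t - f t) / t²` of
`f t / t`. -/
theorem strictMonoOn_div_self_of_div_lt_deriv {f f' : ℝ → ℝ}
    (hderiv : ∀ t, 0 < t → HasDerivAt f (f' t) t) (hgt : ∀ t, 0 < t → f t / t < f' t) :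
    StrictMonoOn (fun t => f t / t) (Ioi 0) := by
  have hquot : ∀ t, 0 < t → HasDerivAt (fun t => f t / t) ((f' t * t - f t * 1) / t ^ 2) t :=
    fun t ht => (hderiv t ht).div (hasDerivAt_id t) ht.ne'
  refine strictMonoOn_of_hasDerivWithinAt_pos (convex_Ioi 0)
    (fun t ht => (hquot t ht).continuousAt.continuousWithinAt)
    (fun t ht => (hquot t (interior_subset ht)).hasDerivWithinAt) fun t ht => ?_
  rw [interior_Ioi] at ht
  have hft : f t < f' t * t := (div_lt_iff₀ ht).1 (hgt t ht)
  exact div_pos (by linarith) (pow_pos ht 2)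

theorem StrictMonoOn.subsingleton_zeros_of_div_self {f : ℝ → ℝ} {s : Set ℝ}
    (hmono : StrictMonoOn (fun t => f t / t) s) : {t ∈ s | f t = 0}.Subsingleton := by
  rintro x ⟨hxs, hfx⟩ y ⟨hys, hfy⟩
  exact hmono.injOn hxs hys (by simp only [hfx, hfy, zero_div])

theorem exists_pos_zero_of_tendsto_neg_of_tendsto_atTop {f : ℝ → ℝ} {L : ℝ} (hL : L < 0)
    (hcont : ContinuousOn f (Ioi 0)) (hlim0 : Tendsto f (𝓝[>] 0) (𝓝 L))
    (hlimtop : Tendsto f atTop atTop) : ∃ t ∈ Ioi (0 : ℝ), f t = 0 :=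
  isPreconnected_Ioi.intermediate_value_Ioi (le_principal_iff.2 self_mem_nhdsWithin)
    (le_principal_iff.2 (Ioi_mem_atTop 0)) hcont hlim0 hlimtop hL

theorem exists_unique_zero (f f' : ℝ → ℝ) (L : ℝ) (hL : L < 0)
    (hcont : ContinuousOn f (Set.Ioi 0))
    (hlim0 : Tendsto f (nhdsWithin 0 (Set.Ioi 0)) (nhds L))
    (hlimtop : Tendsto f atTop atTop)
    (hderiv : ∀ t, 0 < t → HasDerivAt f (f' t) t)
    (hgt : ∀ t, 0 < t → f t / t < f' t) :
    ∃! t : ℝ, t ∈ Set.Ioi (0 : ℝ) ∧ f t = 0 := by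
  obtain ⟨t, ht, hft⟩ := exists_pos_zero_of_tendsto_neg_of_tendsto_atTop hL hcont hlim0 hlimtop
  have hzeros := (strictMonoOn_div_self_of_div_lt_deriv hderiv hgt).subsingleton_zeros_of_div_self
  exact ⟨t, ⟨ht, hft⟩, fun y hy => hzeros hy ⟨ht, hft⟩⟩
end

section
/- Let (Ω, μ) be a finite measure space, u : Ω → ℝ measurable, λ > 0, b > 0, and s ∈ (0,1). Suppose (∫ e^u dμ)^2 ≥ (4nb/λ) ∫ e^{2u} dμ for some n ≥ 1, and all integrals are finite. Then ∫ e^u dμ ≤ (λ/(4nb))^{(1-s)/s} (∫ e^{su} dμ)^{1/s}. -/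
open MeasureTheory Real

/-! Hölder's inequality makes `t ↦ ∫ exp (t * u)` log-convex; since `1` is the convex combination
of `s` and `2` with weight `θ = 1/(2-s)` on `s`, writing `I, A, B` for the integrals at `1, s, 2`
gives `I ≤ A^θ B^(1-θ)`. The hypothesis bounds `B` by `C I²` with `C = λ/(4nb)`; raising to the
power `2 - s` and cancelling `I^(2-2s)` leaves `I^s ≤ A C^(1-s)`. -/

section ExpMoments

variable {Ω : Type*} [MeasurableSpace Ω] {μ : Measure Ω} {u : Ω → ℝ}

lemma memLp_exp_mul_of_integrable (hu : AEMeasurable u μ) {t p : ℝ} (hp : 0 < p)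
    (h : Integrable (fun x => exp (p * t * u x)) μ) :
    MemLp (fun x => exp (t * u x)) (ENNReal.ofReal p) μ := by
  rw [← integrable_norm_rpow_iff (hu.const_mul t).exp.aestronglyMeasurable (by simpa using hp)
    ENNReal.ofReal_ne_top, ENNReal.toReal_ofReal hp.le]
  refine h.congr (ae_of_all _ fun x => ?_)
  simp only [norm_of_nonneg (exp_pos _).le, ← exp_mul]
  ring_nf

theorem integral_exp_mul_le_rpow_mul_rpow (hu : AEMeasurable u μ) {θ a c : ℝ}
    (hθ0 : 0 < θ) (hθ1 : θ < 1) (ha : Integrable (fun x => exp (a * u x)) μ)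
    (hc : Integrable (fun x => exp (c * u x)) μ) :
    ∫ x, exp ((θ * a + (1 - θ) * c) * u x) ∂μ
      ≤ (∫ x, exp (a * u x) ∂μ) ^ θ * (∫ x, exp (c * u x) ∂μ) ^ (1 - θ) := by
  have hθ1' : 0 < 1 - θ := sub_pos.2 hθ1
  have key := integral_mul_le_Lp_mul_Lq_of_nonneg
    (holderConjugate_one_div hθ0 hθ1' (by ring))
    (ae_of_all _ fun x => (exp_pos (θ * a * u x)).le)
    (ae_of_all _ fun x => (exp_pos ((1 - θ) * c * u x)).le)
    (memLp_exp_mul_of_integrable hu (one_div_pos.2 hθ0) (by field_simp; exact ha))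
    (memLp_exp_mul_of_integrable hu (one_div_pos.2 hθ1') (by field_simp; exact hc))
  have hf (x : Ω) : θ * a * u x * (1 / θ) = a * u x := by field_simp
  have hg (x : Ω) : (1 - θ) * c * u x * (1 / (1 - θ)) = c * u x := by field_simp
  have hfg (x : Ω) : θ * a * u x + (1 - θ) * c * u x = (θ * a + (1 - θ) * c) * u x := by ring
  simpa only [← exp_add, ← exp_mul, one_div_one_div, hf, hg, hfg] using key

end ExpMoments

lemma le_rpow_mul_rpow_of_le_rpow_mul_mul_sq_rpow {I A C s : ℝ} (hI : 0 ≤ I) (hA : 0 ≤ A)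
    (hC : 0 ≤ C) (hs0 : 0 < s) (hs1 : s < 1)
    (h : I ≤ A ^ (1 / (2 - s)) * (C * I ^ 2) ^ (1 - 1 / (2 - s))) :
    I ≤ C ^ ((1 - s) / s) * A ^ (1 / s) := by
  rcases hI.eq_or_lt with rfl | hI
  · positivity
  have h2s : 0 < 2 - s := by linarith
  have hpow : I ^ (2 - s) ≤ A * C ^ (1 - s) * I ^ (2 * (1 - s)) :=
    calc I ^ (2 - s) ≤ (A ^ (1 / (2 - s)) * (C * I ^ 2) ^ (1 - 1 / (2 - s))) ^ (2 - s) :=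
          rpow_le_rpow hI.le h h2s.le
      _ = A * C ^ (1 - s) * I ^ (2 * (1 - s)) := by
          have he : (1 - 1 / (2 - s)) * (2 - s) = 1 - s := by field_simp; ring
          rw [mul_rpow (by positivity) (by positivity), ← rpow_mul hA, ← rpow_mul (by positivity),
            one_div_mul_cancel h2s.ne', rpow_one, he, mul_rpow hC (by positivity),
            ← rpow_natCast, ← rpow_mul hI.le, mul_assoc]
          norm_num
  have hs : I ^ s ≤ A * C ^ (1 - s) := by
    rwa [show 2 - s = s + 2 * (1 - s) by ring, rpow_add hI,
      mul_le_mul_iff_of_pos_right (rpow_pos_of_pos hI _)] at hpow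
  calc I = (I ^ s) ^ (1 / s) := by rw [← rpow_mul hI.le, mul_one_div_cancel hs0.ne', rpow_one]
    _ ≤ (A * C ^ (1 - s)) ^ (1 / s) := rpow_le_rpow (by positivity) hs (by positivity)
    _ = C ^ ((1 - s) / s) * A ^ (1 / s) := by
        rw [mul_rpow hA (by positivity), ← rpow_mul hC, mul_one_div, mul_comm]

theorem exp_integral_interpolation_bound_general
    {Ω : Type*} [MeasurableSpace Ω] (μ : Measure Ω) [IsFiniteMeasure μ]
    (u : Ω → ℝ) (hu : Measurable u)
    (n : ℕ) (hn : 1 ≤ n) (lam b : ℝ) (hlam : 0 < lam) (hb : 0 < b)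
    (s : ℝ) (hs0 : 0 < s) (hs1 : s < 1)
    (he2u : Integrable (fun x => exp (2 * u x)) μ)
    (hesu : Integrable (fun x => exp (s * u x)) μ)
    (hconstraint : (4 * n * b / lam) * ∫ x, exp (2 * u x) ∂μ
        ≤ (∫ x, exp (u x) ∂μ) ^ 2) :
    ∫ x, exp (u x) ∂μ
      ≤ (lam / (4 * n * b)) ^ ((1 - s) / s) * (∫ x, exp (s * u x) ∂μ) ^ (1 / s) := by
  have hn' : (0 : ℝ) < n := by exact_mod_cast hn
  have h2s : 0 < 2 - s := by linarith
  have hθ1 : 1 / (2 - s) < 1 := (div_lt_one h2s).2 (by linarith)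
  have hholder := integral_exp_mul_le_rpow_mul_rpow hu.aemeasurable (one_div_pos.2 h2s) hθ1
    hesu he2u
  rw [show 1 / (2 - s) * s + (1 - 1 / (2 - s)) * 2 = 1 by field_simp; ring] at hholder
  simp only [one_mul] at hholder
  have hsq : ∫ x, exp (2 * u x) ∂μ ≤ lam / (4 * n * b) * (∫ x, exp (u x) ∂μ) ^ 2 :=
    calc ∫ x, exp (2 * u x) ∂μ
        = lam / (4 * n * b) * (4 * n * b / lam * ∫ x, exp (2 * u x) ∂μ) := by field_simp
      _ ≤ lam / (4 * n * b) * (∫ x, exp (u x) ∂μ) ^ 2 := by gcongr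
  exact le_rpow_mul_rpow_of_le_rpow_mul_mul_sq_rpow (integral_nonneg fun _ => (exp_pos _).le)
    (integral_nonneg fun _ => (exp_pos _).le) (by positivity) hs0 hs1
    (hholder.trans (by gcongr))

theorem exp_integral_interpolation_bound
    {Ω : Type*} [MeasurableSpace Ω] (μ : Measure Ω) [IsFiniteMeasure μ]
    (u : Ω → ℝ) (hu : Measurable u)
    (n : ℕ) (hn : 1 ≤ n) (lam b : ℝ) (hlam : 0 < lam) (hb : 0 < b)
    (s : ℝ) (hs0 : 0 < s) (hs1 : s < 1)
    (heu : Integrable (fun x => exp (u x)) μ)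
    (he2u : Integrable (fun x => exp (2 * u x)) μ)
    (hesu : Integrable (fun x => exp (s * u x)) μ)
    (hconstraint : (4 * n * b / lam) * ∫ x, exp (2 * u x) ∂μ
        ≤ (∫ x, exp (u x) ∂μ) ^ 2) :
    ∫ x, exp (u x) ∂μ
      ≤ (lam / (4 * n * b)) ^ ((1 - s) / s) * (∫ x, exp (s * u x) ∂μ) ^ (1 / s) :=
  exp_integral_interpolation_bound_general μ u hu n hn lam b hlam hb s hs0 hs1 he2u hesu hconstraint
end
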